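/- In the first-kind singular BGG complex, after adding the non-standard arrows d_1⋯d_{k−2} 0 0 1 1 d_{k+3}⋯d_n → d_1⋯d_{k−2} 1 0 1 0 d_{k+3}⋯d_n (for 2 ≤ k ≤ n−2) and d_1⋯d_{n−3} 0 0 1 → d_1⋯d_{n−3} 1 0 1 (for k = n−1) to the standard arrows inherited from W^p, the deletion map removing positions k and k+1 becomes a directed-graph isomorphism from the singular Hasse diagram of rank n (with singular set {α_k}) onto the regular Hasse diagram W^{n−2} of binary words of length n−2, where the arrows in W^{n−2} are: swap consecutive 01 to 10, or change final 0 to 1. -/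

import Mathlib

/-!
Deleting the digits at positions `k0, k0 + 1` is precomposition with the monotone injection
`skipPair : Fin (n - 2) → Fin n` that misses exactly these two positions. Words of the singular
diagram are constant there, so an arrow between two of them only changes digits in the range of
`skipPair`, and swaps and raises transfer along precomposition. What is left is index
bookkeeping: positions adjacent in `Fin (n - 2)` stay adjacent in `Fin n` unless they straddle
the gap, where they become the non-standard pair `(k0 - 1, k0 + 2)`; the last position of
`Fin (n - 2)` goes to `n - 1`, or to `k0 - 1` when `k0 + 2 = n`.
-/

namespace Stmt11

/-- The standard arrows of the Hasse diagram `W^p` in the LS encoding: swap a consecutive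
pair `01` to `10`, or change the last digit from `0` to `1`. -/
def Arrow (n : ℕ) (w w' : Fin n → Bool) : Prop :=
  (∃ i j : Fin n, j.val = i.val + 1 ∧ w i = false ∧ w j = true ∧
      w' i = true ∧ w' j = false ∧ ∀ t : Fin n, t ≠ i → t ≠ j → w' t = w t) ∨
  (∃ i : Fin n, i.val = n - 1 ∧ w i = false ∧ w' i = true ∧
      ∀ t : Fin n, t ≠ i → w' t = w t)

/-- The non-standard arrows of the first-kind singular BGG complex at the 1-indexed
singular position `k = k0 + 1` (positions of words are 0-indexed): for `k ≤ n - 2`, the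
digits at positions `k0 - 1` and `k0 + 2` change from `(0, 1)` to `(1, 0)` (the pattern
`0011 → 1010` around the fixed digits `01` at positions `k0, k0+1`); for `k = n - 1`, the
digit at position `k0 - 1 = n - 3` changes from `0` to `1` (the pattern `001 → 101`). -/
def NonStdArrow (n k0 : ℕ) (w w' : Fin n → Bool) : Prop :=
  (∃ i j : Fin n, i.val = k0 - 1 ∧ j.val = k0 + 2 ∧
      w i = false ∧ w j = true ∧ w' i = true ∧ w' j = false ∧
      ∀ t : Fin n, t ≠ i → t ≠ j → w' t = w t) ∨
  (k0 + 2 = n ∧ ∃ i : Fin n, i.val = k0 - 1 ∧ w i = false ∧ w' i = true ∧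
      ∀ t : Fin n, t ≠ i → w' t = w t)

section Transfer

open Function Set

variable {α β γ : Type*}

def SwapsAt (w w' : β → γ) (x y : γ) (i j : β) : Prop :=
  w i = x ∧ w j = y ∧ w' i = y ∧ w' j = x ∧ EqOn w' w {i, j}ᶜ

def RaisesAt (w w' : β → γ) (x y : γ) (i : β) : Prop :=
  w i = x ∧ w' i = y ∧ EqOn w' w {i}ᶜ

variable {e : α → β} {u v : β → γ}

theorem eq_of_comp_eq_of_eqOn_compl_range (huv : EqOn u v (range e)ᶜ) (h : u ∘ e = v ∘ e) :
    u = v := by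
  funext b
  by_cases hb : b ∈ range e
  · obtain ⟨a, rfl⟩ := hb
    exact congrFun h a
  · exact huv hb

theorem mem_range_of_ne (huv : EqOn u v (range e)ᶜ) {b : β} (h : u b ≠ v b) : b ∈ range e :=
  by_contra fun hb => h (huv hb)

theorem eqOn_compl_image_iff (he : Injective e) (huv : EqOn u v (range e)ᶜ) (s : Set α) :
    EqOn v u (e '' s)ᶜ ↔ EqOn (v ∘ e) (u ∘ e) sᶜ := by
  refine ⟨fun h a ha => h fun hs => ha ?_, fun h b hb => ?_⟩
  · obtain ⟨a', ha', hea⟩ := hs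
    exact he hea ▸ ha'
  · by_cases hbe : b ∈ range e
    · obtain ⟨a, rfl⟩ := hbe
      exact h fun ha => hb (mem_image_of_mem e ha)
    · exact (huv hbe).symm

theorem swapsAt_comp_iff (he : Injective e) (huv : EqOn u v (range e)ᶜ) (x y : γ) (i j : α) :
    SwapsAt (u ∘ e) (v ∘ e) x y i j ↔ SwapsAt u v x y (e i) (e j) := by
  simp only [SwapsAt, ← image_pair, eqOn_compl_image_iff he huv, comp_apply]

theorem raisesAt_comp_iff (he : Injective e) (huv : EqOn u v (range e)ᶜ) (x y : γ) (i : α) :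
    RaisesAt (u ∘ e) (v ∘ e) x y i ↔ RaisesAt u v x y (e i) := by
  simp only [RaisesAt, ← image_singleton, eqOn_compl_image_iff he huv, comp_apply]

theorem exists_swapsAt_iff (he : Injective e) (huv : EqOn u v (range e)ᶜ) {x y : γ}
    (hxy : x ≠ y) (P : β → β → Prop) :
    (∃ i j, P i j ∧ SwapsAt u v x y i j) ↔
      ∃ i j, P (e i) (e j) ∧ SwapsAt (u ∘ e) (v ∘ e) x y i j := by
  constructor
  · rintro ⟨i, j, hP, hs⟩
    obtain ⟨a, rfl⟩ := mem_range_of_ne huv (by rw [hs.1, hs.2.2.1]; exact hxy)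
    obtain ⟨b, rfl⟩ := mem_range_of_ne huv (by rw [hs.2.1, hs.2.2.2.1]; exact hxy.symm)
    exact ⟨a, b, hP, (swapsAt_comp_iff he huv x y a b).2 hs⟩
  · rintro ⟨a, b, hP, hs⟩
    exact ⟨e a, e b, hP, (swapsAt_comp_iff he huv x y a b).1 hs⟩

theorem exists_raisesAt_iff (he : Injective e) (huv : EqOn u v (range e)ᶜ) {x y : γ}
    (hxy : x ≠ y) (P : β → Prop) :
    (∃ i, P i ∧ RaisesAt u v x y i) ↔
      ∃ i, P (e i) ∧ RaisesAt (u ∘ e) (v ∘ e) x y i := by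
  constructor
  · rintro ⟨i, hP, hr⟩
    obtain ⟨a, rfl⟩ := mem_range_of_ne huv (by rw [hr.1, hr.2.1]; exact hxy)
    exact ⟨a, hP, (raisesAt_comp_iff he huv x y a).2 hr⟩
  · rintro ⟨a, hP, hr⟩
    exact ⟨e a, hP, (raisesAt_comp_iff he huv x y a).1 hr⟩

end Transfer

theorem arrow_iff {n : ℕ} (w w' : Fin n → Bool) :
    Arrow n w w' ↔ (∃ i j : Fin n, j.val = i.val + 1 ∧ SwapsAt w w' false true i j) ∨
      ∃ i : Fin n, i.val = n - 1 ∧ RaisesAt w w' false true i := by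
  simp [Arrow, SwapsAt, RaisesAt, Set.EqOn]

theorem nonStdArrow_iff {n k0 : ℕ} (w w' : Fin n → Bool) :
    NonStdArrow n k0 w w' ↔
      (∃ i j : Fin n, (i.val = k0 - 1 ∧ j.val = k0 + 2) ∧ SwapsAt w w' false true i j) ∨
        ∃ i : Fin n, (k0 + 2 = n ∧ i.val = k0 - 1) ∧ RaisesAt w w' false true i := by
  simp [NonStdArrow, SwapsAt, RaisesAt, Set.EqOn, and_assoc]

theorem arrow_or_nonStdArrow_iff {n k0 : ℕ} (w w' : Fin n → Bool) :
    Arrow n w w' ∨ NonStdArrow n k0 w w' ↔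
      (∃ i j : Fin n, (j.val = i.val + 1 ∨ i.val = k0 - 1 ∧ j.val = k0 + 2) ∧
          SwapsAt w w' false true i j) ∨
        ∃ i : Fin n, (i.val = n - 1 ∨ k0 + 2 = n ∧ i.val = k0 - 1) ∧
          RaisesAt w w' false true i := by
  simp only [arrow_iff, nonStdArrow_iff, or_and_right, exists_or, or_or_or_comm]

theorem lt_of_add_two_le {k n : ℕ} (h : k + 2 ≤ n) : k < n :=
  Nat.lt_of_add_right_lt (Nat.lt_of_succ_le h)

section SkipPair

variable {n k0 : ℕ} (hk : k0 + 2 ≤ n)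

def skipPair (t : Fin (n - 2)) : Fin n :=
  if h : t.val < k0 then ⟨t.val, h.trans (lt_of_add_two_le hk)⟩
  else ⟨t.val + 2, Nat.add_lt_of_lt_sub t.isLt⟩

theorem skipPair_val (t : Fin (n - 2)) :
    (skipPair hk t).val = if t.val < k0 then t.val else t.val + 2 := by
  unfold skipPair
  split_ifs <;> rfl

theorem skipPair_injective : Function.Injective (skipPair hk) := by
  intro s t h
  have := congrArg Fin.val h
  simp only [skipPair_val] at this
  ext
  split_ifs at this <;> omega

theorem mem_range_skipPair_iff (i : Fin n) :
    i ∈ Set.range (skipPair hk) ↔ i.val ≠ k0 ∧ i.val ≠ k0 + 1 := by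
  constructor
  · rintro ⟨t, rfl⟩
    rw [skipPair_val]
    split_ifs <;> omega
  · rintro ⟨h0, h1⟩
    by_cases hi : i.val < k0
    · exact ⟨⟨i.val, by omega⟩, Fin.ext (by simp [skipPair_val, hi])⟩
    · refine ⟨⟨i.val - 2, by omega⟩, Fin.ext ?_⟩
      simp only [skipPair_val]
      split_ifs <;> omega

theorem dite_eq_comp_skipPair (w : Fin n → Bool) :
    (fun t : Fin (n - 2) =>
      if h : t.val < k0 then w ⟨t.val, h.trans (lt_of_add_two_le hk)⟩
      else w ⟨t.val + 2, Nat.add_lt_of_lt_sub t.isLt⟩) =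
      w ∘ skipPair hk :=
  funext fun _ => (apply_dite w _ _ _).symm

theorem eqOn_compl_range_skipPair {u v : Fin n → Bool}
    (hu : u ⟨k0, lt_of_add_two_le hk⟩ = false ∧ u ⟨k0 + 1, Nat.lt_of_succ_le hk⟩ = true)
    (hv : v ⟨k0, lt_of_add_two_le hk⟩ = false ∧ v ⟨k0 + 1, Nat.lt_of_succ_le hk⟩ = true) :
    Set.EqOn u v (Set.range (skipPair hk))ᶜ := by
  intro i hi
  rw [Set.mem_compl_iff, mem_range_skipPair_iff, not_and_or, not_not, not_not] at hi
  rcases hi with hi | hi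
  · rw [show i = ⟨k0, hi ▸ i.isLt⟩ from Fin.ext hi, hu.1, hv.1]
  · rw [show i = ⟨k0 + 1, hi ▸ i.isLt⟩ from Fin.ext hi, hu.2, hv.2]

theorem bijective_comp_skipPair :
    Function.Bijective (fun w : {w : Fin n → Bool //
        w ⟨k0, lt_of_add_two_le hk⟩ = false ∧ w ⟨k0 + 1, Nat.lt_of_succ_le hk⟩ = true} =>
      w.val ∘ skipPair hk) := by
  refine ⟨fun u v h => Subtype.ext ?_, fun g => ?_⟩
  · exact eq_of_comp_eq_of_eqOn_compl_range (eqOn_compl_range_skipPair hk u.2 v.2) h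
  · have hout (i : Fin n) (hi : i.val = k0 ∨ i.val = k0 + 1) : ¬∃ t, skipPair hk t = i := by
      rw [← Set.mem_range, mem_range_skipPair_iff]
      omega
    -- any word reading `01` at the gap serves as the default outside the range
    refine ⟨⟨Function.extend (skipPair hk) g fun i => decide (k0 < i.val), ?_, ?_⟩,
      Function.extend_comp (skipPair_injective hk) g _⟩
    · rw [Function.extend_apply' _ _ _ (hout _ (Or.inl rfl))]
      simp
    · rw [Function.extend_apply' _ _ _ (hout _ (Or.inr rfl))]
      simp

theorem skipPair_adjacent_iff (s t : Fin (n - 2)) :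
    ((skipPair hk t).val = (skipPair hk s).val + 1 ∨
        (skipPair hk s).val = k0 - 1 ∧ (skipPair hk t).val = k0 + 2) ↔
      t.val = s.val + 1 := by
  simp only [skipPair_val]
  split_ifs <;> omega

theorem skipPair_last_iff (t : Fin (n - 2)) :
    ((skipPair hk t).val = n - 1 ∨ k0 + 2 = n ∧ (skipPair hk t).val = k0 - 1) ↔
      t.val = n - 2 - 1 := by
  have := t.isLt
  simp only [skipPair_val]
  split_ifs <;> omega

end SkipPair

/-- First-kind singular BGG complex, singular position `k = k0 + 1` with `2 ≤ k ≤ n - 1`: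
after adding the non-standard arrows to the standard arrows inherited from `W^p`, the map
deleting the digits at positions `k0, k0 + 1` is an isomorphism of directed graphs from the
singular Hasse diagram of rank `n` onto the regular Hasse diagram `W^{n-2}` of binary words
of length `n - 2` (arrows: swap consecutive `01` to `10`, or change final `0` to `1`). -/
theorem singular_bgg_graph_iso_first_kind (n k0 : ℕ) (hk2 : k0 + 2 ≤ n) :
    Function.Bijective
      (fun (w : {w : Fin n → Bool //
          w ⟨k0, by omega⟩ = false ∧ w ⟨k0 + 1, by omega⟩ = true}) =>
        fun t : Fin (n - 2) =>
          if h : t.val < k0 then w.val ⟨t.val, by omega⟩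
          else w.val ⟨t.val + 2, by omega⟩) ∧
    ∀ (u v : {w : Fin n → Bool //
        w ⟨k0, by omega⟩ = false ∧ w ⟨k0 + 1, by omega⟩ = true}),
      (Arrow n u.val v.val ∨ NonStdArrow n k0 u.val v.val) ↔
        Arrow (n - 2)
          (fun t : Fin (n - 2) =>
            if h : t.val < k0 then u.val ⟨t.val, by omega⟩ else u.val ⟨t.val + 2, by omega⟩)
          (fun t : Fin (n - 2) =>
            if h : t.val < k0 then v.val ⟨t.val, by omega⟩
            else v.val ⟨t.val + 2, by omega⟩) := by
  refine ⟨?_, fun u v => ?_⟩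
  · convert bijective_comp_skipPair hk2 using 1
    funext w
    exact dite_eq_comp_skipPair hk2 w.val
  · have he := skipPair_injective hk2
    have huv := eqOn_compl_range_skipPair hk2 u.2 v.2
    simp only [dite_eq_comp_skipPair hk2]
    rw [arrow_or_nonStdArrow_iff, exists_swapsAt_iff he huv Bool.false_ne_true,
      exists_raisesAt_iff he huv Bool.false_ne_true, arrow_iff]
    simp only [skipPair_adjacent_iff, skipPair_last_iff]

end Stmt11
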